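/- Let T be a tree with maximum degree at most 4 and no vertex of degree 2 that admits a convex rectilinear planar drawing. Then T contains at most two splitters. -/

import Mathlib

/-!
Call a non-leaf vertex a core leaf if exactly one of its neighbours is not a leaf. Counting degrees
in the subtree spanned by the non-leaf vertices shows that a tree with `k ≥ 1` splitters has at
least `k + 2` core leaves, so three splitters give five core leaves.

Without vertices of degree 2, a core leaf `v` has two leaf neighbours, and in a convex drawing their
edges become two distinct axis-parallel rays from `Γ v`. This corner cuts the plane into two sides,
each containing an open quadrant at `Γ v`. The rest of the tree is connected and misses the corner,
so it lies on one side; the other, empty, side contains a quadrant at `Γ v` in one of the four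
diagonal directions. Two of the five core leaves, `v` and `w`, share this direction. Starting at
`Γ v`, which lies on the tree side of `w`, and moving into the empty quadrant of `v` never meets the
corner of `w`, yet eventually enters the empty quadrant of `w`: a contradiction.
-/

open SimpleGraph

namespace TurnRegular

/-- Degree of a vertex: the cardinality of its neighbor set. -/
noncomputable def deg {V : Type*} (G : SimpleGraph V) (v : V) : ℕ :=
  (G.neighborSet v).ncard

/-- A splitter: a vertex adjacent to at least three non-leaf vertices. -/
def IsSplitter {V : Type*} (G : SimpleGraph V) (v : V) : Prop :=
  3 ≤ {u | G.Adj v u ∧ 2 ≤ deg G u}.ncard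

/-- A `k`-fork: a vertex of degree exactly `k+1` adjacent to at least `k` leaves. -/
def IsKFork {V : Type*} (k : ℕ) (G : SimpleGraph V) (v : V) : Prop :=
  deg G v = k + 1 ∧ k ≤ {u | G.Adj v u ∧ deg G u = 1}.ncard

/-- A `k`-caterpillar: a tree with at least three vertices whose non-leaf vertices
form the vertex set of a path, every non-leaf vertex having degree between `3` and `k`. -/
def IsKCaterpillar (k : ℕ) {W : Type*} (G : SimpleGraph W) : Prop :=
  G.IsTree ∧ 3 ≤ Nat.card W ∧
  (∃ (a b : W) (p : G.Walk a b), p.IsPath ∧ ∀ v, 2 ≤ deg G v ↔ v ∈ p.support) ∧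
  (∀ v, 2 ≤ deg G v → 3 ≤ deg G v ∧ deg G v ≤ k)

/-- The vertex set of the connected component of `G - v` containing `u`
(for `u ≠ v`): all vertices reachable from `u` by a walk avoiding `v`. -/
def compAway {V : Type*} (G : SimpleGraph V) (v u : V) : Set V :=
  {w | ∃ p : G.Walk u w, v ∉ p.support}

/-- Vertex set of the branch of `G` at `v` through the component of `G - v`
containing `u`. -/
def branchVerts {V : Type*} (G : SimpleGraph V) (v u : V) : Set V :=
  insert v (compAway G v u)

/-- The branch of `G` at `v` through the component of `G - v` containing `u`:
the subgraph induced on `{v} ∪ C`. -/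
def branch {V : Type*} (G : SimpleGraph V) (v u : V) :
    SimpleGraph (branchVerts G v u) :=
  G.induce (branchVerts G v u)

/-- A 4-windmill: a tree of maximum degree at most 4 with exactly one splitter `v`,
such that `v` has degree 4 and each of the four branches at `v` is a 3-caterpillar. -/
def Is4Windmill {V : Type*} (G : SimpleGraph V) : Prop :=
  G.IsTree ∧ (∀ w, deg G w ≤ 4) ∧
  ∃ v, (∀ w, IsSplitter G w ↔ w = v) ∧ deg G v = 4 ∧
    ∀ u, G.Adj v u → IsKCaterpillar 3 (branch G v u)

/-- A 3-windmill: a tree of maximum degree at most 4 with exactly one splitter `v`,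
such that `v` has exactly three non-leaf neighbors, every other neighbor of `v`
is a leaf, and among the three branches at `v` through the components containing
the non-leaf neighbors, two are 3-caterpillars and one is a 4-caterpillar. -/
def Is3Windmill {V : Type*} (G : SimpleGraph V) : Prop :=
  G.IsTree ∧ (∀ w, deg G w ≤ 4) ∧
  ∃ v, (∀ w, IsSplitter G w ↔ w = v) ∧
    ∃ u₁ u₂ u₃, u₁ ≠ u₂ ∧ u₁ ≠ u₃ ∧ u₂ ≠ u₃ ∧
      G.Adj v u₁ ∧ G.Adj v u₂ ∧ G.Adj v u₃ ∧
      2 ≤ deg G u₁ ∧ 2 ≤ deg G u₂ ∧ 2 ≤ deg G u₃ ∧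
      (∀ u, G.Adj v u → 2 ≤ deg G u → u = u₁ ∨ u = u₂ ∨ u = u₃) ∧
      (∀ u, G.Adj v u → u ≠ u₁ → u ≠ u₂ → u ≠ u₃ → deg G u = 1) ∧
      IsKCaterpillar 3 (branch G v u₁) ∧ IsKCaterpillar 3 (branch G v u₂) ∧
      IsKCaterpillar 4 (branch G v u₃)

/-- A double-windmill: a tree of maximum degree at most 4 with exactly two
splitters `u` and `v` such that (i) every vertex strictly between `u` and `v`
on the `u`–`v` path is adjacent, apart from its neighbors on the path, only
to leaves; (ii) each of `u` and `v` has exactly three non-leaf neighbors and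
every other neighbor is a leaf; (iii) for each of `u` and `v`, the two branches
at it through the components that contain one of its non-leaf neighbors but not
the other splitter are 3-caterpillars. -/
def IsDoubleWindmill {V : Type*} (G : SimpleGraph V) : Prop :=
  G.IsTree ∧ (∀ w, deg G w ≤ 4) ∧
  ∃ u v, u ≠ v ∧ (∀ w, IsSplitter G w ↔ (w = u ∨ w = v)) ∧
    (∀ p : G.Walk u v, p.IsPath →
      ∀ w ∈ p.support, w ≠ u → w ≠ v →
        ∀ x, G.Adj w x → x ∉ p.support → deg G x = 1) ∧
    {x | G.Adj u x ∧ 2 ≤ deg G x}.ncard = 3 ∧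
    {x | G.Adj v x ∧ 2 ≤ deg G x}.ncard = 3 ∧
    (∀ x, G.Adj u x → deg G x = 1 ∨ 2 ≤ deg G x) ∧
    (∀ x, G.Adj v x → deg G x = 1 ∨ 2 ≤ deg G x) ∧
    (∀ x, G.Adj u x → 2 ≤ deg G x → v ∉ branchVerts G u x →
      IsKCaterpillar 3 (branch G u x)) ∧
    (∀ x, G.Adj v x → 2 ≤ deg G x → u ∉ branchVerts G v x →
      IsKCaterpillar 3 (branch G v x))

/-- The closed axis-parallel ray starting at `p` and passing through `q`
(extended to infinity beyond `q`). -/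
def ray (p q : ℝ × ℝ) : Set (ℝ × ℝ) :=
  {x | ∃ t : ℝ, 0 ≤ t ∧ x = p + t • (q - p)}

/-- A rectilinear planar drawing of `G`: an injective placement of the vertices
in the plane such that each edge is a horizontal or vertical segment, and the
segments of two distinct edges meet at most in the image of a common endpoint. -/
def IsRectDrawing {V : Type*} (G : SimpleGraph V) (Γ : V → ℝ × ℝ) : Prop :=
  Function.Injective Γ ∧
  (∀ u v, G.Adj u v → (Γ u).1 = (Γ v).1 ∨ (Γ u).2 = (Γ v).2) ∧
  (∀ u v x y, G.Adj u v → G.Adj x y → s(u, v) ≠ s(x, y) →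
    ∀ p ∈ segment ℝ (Γ u) (Γ v) ∩ segment ℝ (Γ x) (Γ y),
      ∃ w, (w = u ∨ w = v) ∧ (w = x ∨ w = y) ∧ p = Γ w)

/-- The drawn point set of edge `{a, b}` in the drawing `Γ`: its segment, where
the edge is extended beyond each leaf endpoint to an infinite axis-parallel ray. -/
noncomputable def edgeDrawn {V : Type*} (G : SimpleGraph V) (Γ : V → ℝ × ℝ)
    (a b : V) : Set (ℝ × ℝ) :=
  (if deg G b = 1 then ray (Γ a) (Γ b) else segment ℝ (Γ a) (Γ b)) ∪
  (if deg G a = 1 then ray (Γ b) (Γ a) else segment ℝ (Γ a) (Γ b))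

/-- A convex rectilinear planar drawing: a rectilinear planar drawing in which,
after extending every edge incident to a leaf beyond that leaf to an infinite
axis-parallel ray, the resulting point sets of two distinct edges still meet at
most in the image of a common endpoint. -/
def IsConvexRectDrawing {V : Type*} (G : SimpleGraph V) (Γ : V → ℝ × ℝ) : Prop :=
  IsRectDrawing G Γ ∧
  (∀ u v x y, G.Adj u v → G.Adj x y → s(u, v) ≠ s(x, y) →
    ∀ p ∈ edgeDrawn G Γ u v ∩ edgeDrawn G Γ x y,
      ∃ w, (w = u ∨ w = v) ∧ (w = x ∨ w = y) ∧ p = Γ w)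

/-- `G` admits a convex rectilinear planar drawing. -/
def HasConvexDrawing {V : Type*} (G : SimpleGraph V) : Prop :=
  ∃ Γ : V → ℝ × ℝ, IsConvexRectDrawing G Γ

section Tree

open Finset

variable {V : Type*} {G : SimpleGraph V}

noncomputable def innerDeg (G : SimpleGraph V) (v : V) : ℕ :=
  {u | G.Adj v u ∧ 2 ≤ deg G u}.ncard

/-- A leaf of the tree spanned by the non-leaf vertices. -/
def IsCoreLeaf (G : SimpleGraph V) (v : V) : Prop :=
  2 ≤ deg G v ∧ innerDeg G v = 1

lemma eq_of_adj_of_deg_eq_one {ℓ x y : V} (hℓ : deg G ℓ = 1) (hx : G.Adj ℓ x)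
    (hy : G.Adj ℓ y) : x = y := by
  obtain ⟨z, hz⟩ := Set.ncard_eq_one.mp hℓ
  have hx' : x ∈ G.neighborSet ℓ := hx
  have hy' : y ∈ G.neighborSet ℓ := hy
  rw [hz] at hx' hy'
  exact hx'.trans hy'.symm

lemma exists_adj_adj_of_mem_support {a b v : V} {p : G.Walk a b} (hp : p.IsPath)
    (hv : v ∈ p.support) (hva : v ≠ a) (hvb : v ≠ b) :
    ∃ x y, x ≠ y ∧ G.Adj v x ∧ G.Adj v y ∧ x ∈ p.support ∧ y ∈ p.support := by
  obtain ⟨i, rfl, hi⟩ := Walk.mem_support_iff_exists_getVert.mp hv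
  have hi0 : i ≠ 0 := by rintro rfl; exact hva p.getVert_zero
  have hil : i < p.length := lt_of_le_of_ne hi (by rintro rfl; exact hvb p.getVert_length)
  have hprev := p.adj_getVert_succ (i := i - 1) (by omega)
  rw [Nat.sub_add_cancel (by omega)] at hprev
  refine ⟨_, _, fun h => ?_, hprev.symm, p.adj_getVert_succ hil,
    p.getVert_mem_support _, p.getVert_mem_support _⟩
  have := hp.getVert_injOn (by simp; omega) (by simp; omega) h
  omega

section Finite

variable [Finite V]

lemma one_le_deg_of_adj {v u : V} (h : G.Adj v u) : 1 ≤ deg G v :=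
  (Set.ncard_pos (G.neighborSet v).toFinite).mpr ⟨u, h⟩

lemma two_le_ncard_of_ne {s : Set V} {x y : V} (hx : x ∈ s) (hy : y ∈ s) (hxy : x ≠ y) :
    2 ≤ s.ncard :=
  (Set.one_lt_ncard_iff s.toFinite).mpr ⟨x, y, hx, hy, hxy⟩

lemma deg_eq_one_of_adj_of_lt_two {v u : V} (h : G.Adj v u) (hu : ¬ 2 ≤ deg G u) :
    deg G u = 1 := by
  have := one_le_deg_of_adj h.symm
  omega

lemma two_le_deg_of_mem_support {a b v : V} {p : G.Walk a b} (hp : p.IsPath)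
    (ha : 2 ≤ deg G a) (hb : 2 ≤ deg G b) (hv : v ∈ p.support) : 2 ≤ deg G v := by
  by_cases hva : v = a
  · rwa [hva]
  by_cases hvb : v = b
  · rwa [hvb]
  obtain ⟨x, y, hxy, hx, hy, -, -⟩ := exists_adj_adj_of_mem_support hp hv hva hvb
  exact two_le_ncard_of_ne hx hy hxy

lemma exists_adj_two_le_deg (hG : G.Connected) {a b : V} (hab : a ≠ b)
    (hb : 2 ≤ deg G b) : ∃ x, G.Adj a x ∧ 2 ≤ deg G x := by
  obtain ⟨p, hp⟩ := hG.exists_isPath a b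
  have hnil : ¬ p.Nil := Walk.not_nil_of_ne hab
  refine ⟨p.snd, p.adj_snd hnil, ?_⟩
  by_cases hsb : p.snd = b
  · rwa [hsb]
  obtain ⟨x, y, hxy, hx, hy, -, -⟩ := exists_adj_adj_of_mem_support hp (p.getVert_mem_support 1)
    (p.adj_snd hnil).ne.symm hsb
  exact two_le_ncard_of_ne hx hy hxy

lemma one_le_deg (hG : G.Connected) {b : V} (hb : 2 ≤ deg G b) (v : V) : 1 ≤ deg G v := by
  by_cases hvb : v = b
  · rw [hvb]; omega
  obtain ⟨x, hx, -⟩ := exists_adj_two_le_deg hG hvb hb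
  exact one_le_deg_of_adj hx

lemma two_le_deg_of_adj_of_deg_eq_one (hG : G.Connected) {b ℓ u : V} (hb : 2 ≤ deg G b)
    (hℓ : deg G ℓ = 1) (hu : G.Adj ℓ u) : 2 ≤ deg G u := by
  obtain ⟨x, hx, hx2⟩ := exists_adj_two_le_deg hG (a := ℓ) (fun h => by rw [h] at hℓ; omega) hb
  rwa [eq_of_adj_of_deg_eq_one hℓ hu hx]

lemma innerDeg_eq_one_of_deg_eq_one (hG : G.Connected) {b ℓ : V} (hb : 2 ≤ deg G b)
    (hℓ : deg G ℓ = 1) : innerDeg G ℓ = 1 := by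
  obtain ⟨u, hu⟩ := Set.ncard_eq_one.mp hℓ
  have hadj : G.Adj ℓ u := (Set.ext_iff.mp hu u).mpr rfl
  refine Set.ncard_eq_one.mpr ⟨u, Set.eq_singleton_iff_unique_mem.mpr
    ⟨⟨hadj, two_le_deg_of_adj_of_deg_eq_one hG hb hℓ hadj⟩, fun x hx => ?_⟩⟩
  exact eq_of_adj_of_deg_eq_one hℓ hx.1 hadj

lemma one_le_innerDeg_of_adj {v u : V} (hu : G.Adj v u) (hu2 : 2 ≤ deg G u) :
    1 ≤ innerDeg G v :=
  (Set.ncard_pos (Set.toFinite _)).mpr ⟨u, hu, hu2⟩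

lemma innerDeg_le_deg (v : V) : innerDeg G v ≤ deg G v :=
  Set.ncard_le_ncard (fun _ hu => hu.1) (Set.toFinite _)

lemma three_le_deg_of_isSplitter {s : V} (hs : IsSplitter G s) : 3 ≤ deg G s :=
  hs.trans (innerDeg_le_deg s)

lemma exists_adj_leaves_of_isCoreLeaf (hno2 : ∀ v, deg G v ≠ 2) {v : V}
    (hv : IsCoreLeaf G v) : ∃ t ℓ₁ ℓ₂, G.Adj v t ∧ 2 ≤ deg G t ∧ ℓ₁ ≠ ℓ₂ ∧
      G.Adj v ℓ₁ ∧ G.Adj v ℓ₂ ∧ deg G ℓ₁ = 1 ∧ deg G ℓ₂ = 1 := by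
  obtain ⟨t, ht⟩ := Set.ncard_eq_one.mp hv.2
  have hvt : G.Adj v t ∧ 2 ≤ deg G t := (Set.ext_iff.mp ht t).mpr rfl
  have hleaf : ∀ u, G.Adj v u → u ≠ t → deg G u = 1 := fun u hu hut =>
    deg_eq_one_of_adj_of_lt_two hu fun h2 => hut ((Set.ext_iff.mp ht u).mp ⟨hu, h2⟩)
  have h3 : 3 ≤ (G.neighborSet v).ncard := by have := hno2 v; have := hv.1; unfold deg at *; omega
  have : 1 < (G.neighborSet v \ {t}).ncard := by
    rw [Set.ncard_sdiff_singleton_of_mem (show t ∈ G.neighborSet v from hvt.1)]; omega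
  obtain ⟨ℓ₁, ℓ₂, ⟨h₁, ht₁⟩, ⟨h₂, ht₂⟩, hne⟩ := (Set.one_lt_ncard_iff (Set.toFinite _)).mp this
  exact ⟨t, ℓ₁, ℓ₂, hvt.1, hvt.2, hne, h₁, h₂, hleaf _ h₁ ht₁, hleaf _ h₂ ht₂⟩

lemma notMem_support_of_isCoreLeaf {a b v : V} {p : G.Walk a b} (hp : p.IsPath)
    (ha : 2 ≤ deg G a) (hb : 2 ≤ deg G b) (hv : IsCoreLeaf G v) (hva : v ≠ a) (hvb : v ≠ b) :
    v ∉ p.support := by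
  intro hvp
  obtain ⟨x, y, hxy, hx, hy, hxp, hyp⟩ := exists_adj_adj_of_mem_support hp hvp hva hvb
  have := two_le_ncard_of_ne (s := {u | G.Adj v u ∧ 2 ≤ deg G u})
    ⟨hx, two_le_deg_of_mem_support hp ha hb hxp⟩ ⟨hy, two_le_deg_of_mem_support hp ha hb hyp⟩ hxy
  have := hv.2
  unfold innerDeg at this
  omega

end Finite

section Fintype

variable [Fintype V]

lemma deg_eq_degree [DecidableRel G.Adj] (v : V) : deg G v = G.degree v := by
  rw [deg, ← card_neighborFinset_eq_degree, neighborFinset_def, Set.ncard_eq_toFinset_card']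

lemma sum_innerDeg_eq_sum_degree [DecidableRel G.Adj] :
    ∑ v, innerDeg G v = ∑ u with 2 ≤ deg G u, G.degree u := by
  classical
  have hinner : ∀ v, innerDeg G v = ∑ u, if G.Adj v u ∧ 2 ≤ deg G u then 1 else 0 := by
    intro v
    rw [innerDeg, Set.ncard_eq_toFinset_card', Set.toFinset_ofPred, Finset.card_filter]
  simp_rw [hinner]
  rw [Finset.sum_comm, Finset.sum_filter]
  refine Finset.sum_congr rfl fun u _ => ?_
  split_ifs with hu
  · simp only [hu, and_true, Finset.sum_boole, Nat.cast_id, ← card_neighborFinset_eq_degree]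
    congr 1
    ext v
    simp [adj_comm]
  · simp [hu]

/-- The non-leaf vertices span a subtree; this is its handshake identity. -/
theorem sum_innerDeg_add_two (htree : G.IsTree) {b : V} (hb : 2 ≤ deg G b) :
    ∑ v with 2 ≤ deg G v, innerDeg G v + 2 = 2 * #{v | 2 ≤ deg G v} := by
  classical
  have hG := htree.connected
  have hleaf : ∀ v ∈ ({v | ¬ 2 ≤ deg G v} : Finset V), deg G v = 1 := fun v hv =>
    by have := one_le_deg hG hb v; simp only [Finset.mem_filter] at hv; omega
  have hL : ∀ f : V → ℕ, (∀ v, deg G v = 1 → f v = 1) →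
      ∑ v with ¬ 2 ≤ deg G v, f v = #{v | ¬ 2 ≤ deg G v} := fun f hf => by
    rw [Finset.card_eq_sum_ones]
    exact Finset.sum_congr rfl fun v hv => hf v (hleaf v hv)
  have hinner := sum_innerDeg_eq_sum_degree (G := G)
  rw [← Finset.sum_filter_add_sum_filter_not _ (fun v => 2 ≤ deg G v),
    hL _ fun v hv => innerDeg_eq_one_of_deg_eq_one hG hb hv] at hinner
  have hsum := G.sum_degrees_eq_twice_card_edges
  rw [← Finset.sum_filter_add_sum_filter_not _ (fun v => 2 ≤ deg G v),
    hL _ fun v hv => by rw [← deg_eq_degree, hv]] at hsum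
  have hcard := Finset.card_filter_add_card_filter_not (s := Finset.univ)
    (fun v => 2 ≤ deg G v)
  have hedges := htree.card_edgeFinset
  rw [Finset.card_univ] at hcard
  omega

lemma sum_ite_eq_ncard {p : V → Prop} [DecidablePred p] (hp : ∀ v, p v → 2 ≤ deg G v) :
    ∑ v with 2 ≤ deg G v, (if p v then 1 else 0) = {v | p v}.ncard := by
  rw [Finset.sum_boole, Nat.cast_id, Finset.filter_filter, Set.ncard_eq_toFinset_card',
    Set.toFinset_ofPred]
  congr 1
  ext v
  simpa using hp v

theorem ncard_splitter_add_two_le (htree : G.IsTree) {s : V} (hs : IsSplitter G s) :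
    {v | IsSplitter G v}.ncard + 2 ≤ {v | IsCoreLeaf G v}.ncard := by
  classical
  have hs3 := three_le_deg_of_isSplitter hs
  have hinner : ∀ v, 2 ≤ deg G v → 1 ≤ innerDeg G v := by
    intro v hv
    by_cases hvs : v = s
    · exact hvs ▸ le_trans (by norm_num) hs
    obtain ⟨x, hx, hx2⟩ := exists_adj_two_le_deg htree.connected hvs (by omega)
    exact one_le_innerDeg_of_adj hx hx2
  have hpoint : ∀ v ∈ ({v | 2 ≤ deg G v} : Finset V), 2 + (if IsSplitter G v then 1 else 0) ≤
      innerDeg G v + (if IsCoreLeaf G v then 1 else 0) := by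
    intro v hv
    have hv : 2 ≤ deg G v := (Finset.mem_filter.mp hv).2
    have := hinner v hv
    rw [show IsCoreLeaf G v ↔ innerDeg G v = 1 from and_iff_right hv]
    by_cases h₃ : IsSplitter G v
    · have : 3 ≤ innerDeg G v := h₃
      simp only [h₃, if_true]; split_ifs <;> omega
    · have : ¬ 3 ≤ innerDeg G v := h₃
      simp only [h₃, if_false]; split_ifs <;> omega
  have hsum := Finset.sum_le_sum hpoint
  rw [Finset.sum_add_distrib, Finset.sum_add_distrib,
    sum_ite_eq_ncard fun v hv => by have := three_le_deg_of_isSplitter hv; omega,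
    sum_ite_eq_ncard fun v hv => hv.1, Finset.sum_const, smul_eq_mul] at hsum
  have := sum_innerDeg_add_two htree (b := s) (by omega)
  omega

end Fintype

end Tree
section Plane

open Set

structure Separates {X : Type*} [TopologicalSpace X] (K A B : Set X) : Prop where
  isOpen_left : IsOpen A
  isOpen_right : IsOpen B
  disjoint : Disjoint A B
  compl_eq : Kᶜ = A ∪ B

namespace Separates

variable {X : Type*} [TopologicalSpace X] {K A B S : Set X}

lemma symm (h : Separates K A B) : Separates K B A :=
  ⟨h.isOpen_right, h.isOpen_left, h.disjoint.symm, by rw [h.compl_eq, union_comm]⟩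

lemma disjoint_left (h : Separates K A B) : Disjoint K A :=
  disjoint_compl_right.mono_right (h.compl_eq ▸ subset_union_left)

lemma of_frontier {O : Set X} (hO : IsOpen O) : Separates (frontier O) O (closure O)ᶜ where
  isOpen_left := hO
  isOpen_right := isClosed_closure.isOpen_compl
  disjoint := disjoint_compl_right.mono_right (compl_subset_compl.mpr subset_closure)
  compl_eq := by
    ext x
    have := subset_closure (s := O) (a := x)
    simp only [hO.frontier_eq, mem_compl_iff, mem_sdiff, mem_union, not_and_not_right]
    tauto

lemma subset_left_of_isPreconnected (h : Separates K A B) (hS : IsPreconnected S)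
    (hSK : Disjoint S K) {x : X} (hxS : x ∈ S) (hxA : x ∈ A) : S ⊆ A :=
  hS.subset_left_of_subset_union h.isOpen_left h.isOpen_right h.disjoint
    (h.compl_eq ▸ hSK.subset_compl_right) ⟨x, hxS, hxA⟩

end Separates

def closedHalf : Bool → ℝ → Set ℝ
  | true, a => Ici a
  | false, a => Iic a

def openHalf : Bool → ℝ → Set ℝ
  | true, a => Ioi a
  | false, a => Iio a

lemma isOpen_openHalf (s : Bool) (a : ℝ) : IsOpen (openHalf s a) := by
  cases s
  exacts [isOpen_Iio, isOpen_Ioi]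

lemma convex_openHalf (s : Bool) (a : ℝ) : Convex ℝ (openHalf s a) := by
  cases s
  exacts [convex_Iio a, convex_Ioi a]

lemma closure_openHalf (s : Bool) (a : ℝ) : closure (openHalf s a) = closedHalf s a := by
  cases s
  exacts [closure_Iio a, closure_Ioi a]

lemma frontier_openHalf (s : Bool) (a : ℝ) : frontier (openHalf s a) = {a} := by
  cases s
  exacts [frontier_Iio, frontier_Ioi]

lemma mem_closedHalf_self (s : Bool) (a : ℝ) : a ∈ closedHalf s a := by
  cases s <;> exact le_refl a

lemma closedHalf_union_not (s : Bool) (a : ℝ) : closedHalf s a ∪ closedHalf (!s) a = univ := by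
  cases s
  exacts [Iic_union_Ici, Ici_union_Iic]

lemma openHalf_not_subset_compl_closedHalf (s : Bool) (a : ℝ) :
    openHalf (!s) a ⊆ (closedHalf s a)ᶜ := by
  cases s <;> intro x hx <;>
    simpa only [openHalf, closedHalf, Bool.not_true, Bool.not_false, mem_compl_iff, mem_Ici,
      mem_Iic, mem_Ioi, mem_Iio, not_le] using hx

lemma openHalf_inter_nonempty (s : Bool) (a b : ℝ) : (openHalf s a ∩ openHalf s b).Nonempty := by
  cases s
  · exact ⟨min a b - 1, by simp only [openHalf, mem_inter_iff, mem_Iio]; constructor <;>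
      linarith [min_le_left a b, min_le_right a b]⟩
  · exact ⟨max a b + 1, by simp only [openHalf, mem_inter_iff, mem_Ioi]; constructor <;>
      linarith [le_max_left a b, le_max_right a b]⟩

def halfLine : Bool → Bool → ℝ × ℝ → Set (ℝ × ℝ)
  | true, s, c => closedHalf s c.1 ×ˢ {c.2}
  | false, s, c => {c.1} ×ˢ closedHalf s c.2

def quadrant (δ : Bool × Bool) (c : ℝ × ℝ) : Set (ℝ × ℝ) :=
  openHalf δ.1 c.1 ×ˢ openHalf δ.2 c.2

lemma isOpen_quadrant (δ : Bool × Bool) (c : ℝ × ℝ) : IsOpen (quadrant δ c) :=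
  (isOpen_openHalf _ _).prod (isOpen_openHalf _ _)

lemma closure_quadrant (δ : Bool × Bool) (c : ℝ × ℝ) :
    closure (quadrant δ c) = closedHalf δ.1 c.1 ×ˢ closedHalf δ.2 c.2 := by
  rw [quadrant, closure_prod_eq, closure_openHalf, closure_openHalf]

lemma quadrant_inter_nonempty (δ : Bool × Bool) (a b : ℝ × ℝ) :
    (quadrant δ a ∩ quadrant δ b).Nonempty := by
  rw [quadrant, quadrant, prod_inter_prod]
  exact (openHalf_inter_nonempty _ _ _).prod (openHalf_inter_nonempty _ _ _)

lemma isPreconnected_insert_quadrant (δ : Bool × Bool) (c : ℝ × ℝ) :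
    IsPreconnected (insert c (quadrant δ c)) := by
  refine ((convex_openHalf _ _).prod (convex_openHalf _ _)).isPreconnected.subset_closure
    (subset_insert _ _) (insert_subset ?_ subset_closure)
  change c ∈ closure (quadrant δ c)
  rw [closure_quadrant]
  exact ⟨mem_closedHalf_self _ _, mem_closedHalf_self _ _⟩

lemma quadrant_subset_compl_prod_left {δ : Bool × Bool} {s : Bool} (hs : δ.1 = !s)
    (c : ℝ × ℝ) (U : Set ℝ) : quadrant δ c ⊆ (closedHalf s c.1 ×ˢ U)ᶜ := fun _ hz hz' =>
  openHalf_not_subset_compl_closedHalf s c.1 (hs ▸ hz.1) hz'.1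

lemma quadrant_subset_compl_prod_right {δ : Bool × Bool} {s : Bool} (hs : δ.2 = !s)
    (c : ℝ × ℝ) (U : Set ℝ) : quadrant δ c ⊆ (U ×ˢ closedHalf s c.2)ᶜ := fun _ hz hz' =>
  openHalf_not_subset_compl_closedHalf s c.2 (hs ▸ hz.2) hz'.2

lemma exists_separates_of_frontier_eq {K O : Set (ℝ × ℝ)} {c : ℝ × ℝ} (hO : IsOpen O)
    (hK : frontier O = K) {δ₁ δ₂ : Bool × Bool} (h₁ : quadrant δ₁ c ⊆ O)
    (h₂ : quadrant δ₂ c ⊆ (closure O)ᶜ) :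
    ∃ A B, Separates K A B ∧ (∃ δ, quadrant δ c ⊆ A) ∧ ∃ δ, quadrant δ c ⊆ B :=
  ⟨O, _, hK ▸ Separates.of_frontier hO, ⟨δ₁, h₁⟩, δ₂, h₂⟩

/-- The union is the frontier of a half-plane or of a quadrant. -/
theorem exists_separates_halfLine_union {h₁ s₁ h₂ s₂ : Bool} (hne : (h₁, s₁) ≠ (h₂, s₂))
    (c : ℝ × ℝ) : ∃ A B, Separates (halfLine h₁ s₁ c ∪ halfLine h₂ s₂ c) A B ∧
      (∃ δ, quadrant δ c ⊆ A) ∧ ∃ δ, quadrant δ c ⊆ B := by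
  wlog h : h₁ = true ∨ h₂ = false generalizing h₁ s₁ h₂ s₂
  · rw [union_comm]
    exact this (Ne.symm hne) (by cases h₁ <;> cases h₂ <;> simp_all)
  rcases h₁ with _ | _ <;> rcases h₂ with _ | _
  · obtain rfl : s₂ = !s₁ := by cases s₁ <;> cases s₂ <;> simp_all
    refine exists_separates_of_frontier_eq (O := openHalf true c.1 ×ˢ univ) (δ₁ := (true, true))
      (δ₂ := (false, true)) ((isOpen_openHalf _ _).prod isOpen_univ) ?_
      (prod_mono subset_rfl (subset_univ _)) ?_
    · rw [frontier_prod_eq, frontier_openHalf, frontier_univ, closure_univ, prod_empty,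
        empty_union, halfLine, halfLine, ← prod_union, closedHalf_union_not]
    · rw [closure_prod_eq, closure_openHalf]
      exact quadrant_subset_compl_prod_left rfl c _
  · simp at h
  · refine exists_separates_of_frontier_eq (O := quadrant (s₁, s₂) c) (δ₁ := (s₁, s₂))
      (δ₂ := (!s₁, s₂)) (isOpen_quadrant _ _) ?_ subset_rfl ?_
    · rw [quadrant, frontier_prod_eq, frontier_openHalf, frontier_openHalf, closure_openHalf,
        closure_openHalf, halfLine, halfLine, union_comm]
    · rw [closure_quadrant]
      exact quadrant_subset_compl_prod_left rfl c _
  · obtain rfl : s₂ = !s₁ := by cases s₁ <;> cases s₂ <;> simp_all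
    refine exists_separates_of_frontier_eq (O := univ ×ˢ openHalf true c.2) (δ₁ := (true, true))
      (δ₂ := (true, false)) (isOpen_univ.prod (isOpen_openHalf _ _)) ?_
      (prod_mono (subset_univ _) subset_rfl) ?_
    · rw [frontier_prod_eq, frontier_openHalf, frontier_univ, closure_univ, empty_prod,
        union_empty, halfLine, halfLine, ← union_prod, closedHalf_union_not]
    · rw [closure_prod_eq, closure_openHalf]
      exact quadrant_subset_compl_prod_right rfl c _

theorem exists_separates_halfLine_union_of_notMem {h₁ s₁ h₂ s₂ : Bool}
    (hne : (h₁, s₁) ≠ (h₂, s₂)) {c x : ℝ × ℝ} (hx : x ∉ halfLine h₁ s₁ c ∪ halfLine h₂ s₂ c) :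
    ∃ A B δ, Separates (halfLine h₁ s₁ c ∪ halfLine h₂ s₂ c) A B ∧ x ∈ A ∧ quadrant δ c ⊆ B := by
  obtain ⟨A, B, hsep, ⟨δA, hA⟩, δB, hB⟩ := exists_separates_halfLine_union hne c
  rcases (hsep.compl_eq ▸ hx : x ∈ A ∪ B) with hxA | hxB
  · exact ⟨A, B, δB, hsep, hxA, hB⟩
  · exact ⟨B, A, δA, hsep.symm, hxB, hA⟩

/-- The corner `c₁` together with its quadrant is a connected set avoiding `K₂` that starts on the
side `A₂`, but the quadrants at `c₁` and `c₂` in the same direction meet. -/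
theorem Separates.not_quadrant_subset {K₁ A₁ B₁ K₂ A₂ B₂ : Set (ℝ × ℝ)} {c₁ c₂ : ℝ × ℝ}
    {δ : Bool × Bool} (h₁ : Separates K₁ A₁ B₁) (h₂ : Separates K₂ A₂ B₂) (hc₁ : c₁ ∈ A₂)
    (hK₂ : K₂ ⊆ A₁) (hQ₁ : quadrant δ c₁ ⊆ B₁) : ¬ quadrant δ c₂ ⊆ B₂ := by
  intro hQ₂
  have hS : insert c₁ (quadrant δ c₁) ⊆ A₂ := by
    refine h₂.subset_left_of_isPreconnected (isPreconnected_insert_quadrant δ c₁) ?_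
      (mem_insert _ _) hc₁
    rw [disjoint_insert_left]
    exact ⟨fun hc => h₂.disjoint_left.ne_of_mem hc hc₁ rfl, h₁.disjoint.symm.mono hQ₁ hK₂⟩
  obtain ⟨p, hp₁, hp₂⟩ := quadrant_inter_nonempty δ c₁ c₂
  exact h₂.disjoint.ne_of_mem (hS (mem_insert_of_mem _ hp₁)) (hQ₂ hp₂) rfl

end Plane
section Drawing

open Set

lemma exists_nonneg_eq_add_mul_sub_iff {a b x : ℝ} (hab : a ≠ b) :
    (∃ t : ℝ, 0 ≤ t ∧ x = a + t * (b - a)) ↔ x ∈ closedHalf (decide (a < b)) a := by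
  rcases hab.lt_or_gt with h | h
  · simp only [h, decide_true, closedHalf, mem_Ici]
    constructor
    · rintro ⟨t, ht, rfl⟩
      nlinarith
    · intro hx
      exact ⟨(x - a) / (b - a), div_nonneg (by linarith) (by linarith), by field_simp; ring⟩
  · simp only [not_lt.mpr h.le, decide_false, closedHalf, mem_Iic]
    constructor
    · rintro ⟨t, ht, rfl⟩
      nlinarith
    · intro hx
      exact ⟨(a - x) / (a - b), div_nonneg (by linarith) (by linarith), by
        field_simp; ring⟩

lemma mem_ray_iff {p q z : ℝ × ℝ} :
    z ∈ ray p q ↔ ∃ t : ℝ, 0 ≤ t ∧ z.1 = p.1 + t * (q.1 - p.1) ∧ z.2 = p.2 + t * (q.2 - p.2) := by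
  simp [ray, Prod.ext_iff]

lemma ray_eq_halfLine {p q : ℝ × ℝ} (hpq : p ≠ q) (h : p.1 = q.1 ∨ p.2 = q.2) :
    ∃ b s, ray p q = halfLine b s p := by
  rcases h with h | h
  · have h2 : p.2 ≠ q.2 := fun h2 => hpq (Prod.ext h h2)
    refine ⟨false, decide (p.2 < q.2), ext fun z => ?_⟩
    simp only [mem_ray_iff, ← h, sub_self, mul_zero, add_zero, halfLine, mem_prod,
      mem_singleton_iff, ← exists_nonneg_eq_add_mul_sub_iff h2]
    constructor
    · rintro ⟨t, ht, h1, h2⟩; exact ⟨h1, t, ht, h2⟩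
    · rintro ⟨h1, t, ht, h2⟩; exact ⟨t, ht, h1, h2⟩
  · have h1 : p.1 ≠ q.1 := fun h1 => hpq (Prod.ext h1 h)
    refine ⟨true, decide (p.1 < q.1), ext fun z => ?_⟩
    simp only [mem_ray_iff, ← h, sub_self, mul_zero, add_zero, halfLine, mem_prod,
      mem_singleton_iff, ← exists_nonneg_eq_add_mul_sub_iff h1]
    constructor
    · rintro ⟨t, ht, h1, h2⟩; exact ⟨⟨t, ht, h1⟩, h2⟩
    · rintro ⟨⟨t, ht, h1⟩, h2⟩; exact ⟨t, ht, h1, h2⟩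

lemma left_mem_ray (p q : ℝ × ℝ) : p ∈ ray p q := ⟨0, le_rfl, by simp⟩

lemma right_mem_ray (p q : ℝ × ℝ) : q ∈ ray p q := ⟨1, zero_le_one, by simp⟩

lemma segment_subset_ray (p q : ℝ × ℝ) : segment ℝ p q ⊆ ray p q := by
  rw [segment_eq_image']
  rintro x ⟨t, ht, rfl⟩
  exact ⟨t, ht.1, rfl⟩

lemma convex_ray (p q : ℝ × ℝ) : Convex ℝ (ray p q) := by
  rintro x ⟨t₁, h₁, rfl⟩ y ⟨t₂, h₂, rfl⟩ a b ha hb hab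
  refine ⟨a * t₁ + b * t₂, by positivity, ?_⟩
  calc a • (p + t₁ • (q - p)) + b • (p + t₂ • (q - p))
      = (a + b) • p + (a * t₁ + b * t₂) • (q - p) := by
        simp only [smul_add, smul_smul, add_smul]; abel
    _ = p + (a * t₁ + b * t₂) • (q - p) := by rw [hab, one_smul]

variable {V : Type*} {G : SimpleGraph V} {Γ : V → ℝ × ℝ}

lemma left_mem_edgeDrawn (a b : V) : Γ a ∈ edgeDrawn G Γ a b := by
  refine mem_union_left _ ?_
  split_ifs
  exacts [left_mem_ray _ _, left_mem_segment ℝ _ _]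

lemma right_mem_edgeDrawn (a b : V) : Γ b ∈ edgeDrawn G Γ a b := by
  refine mem_union_left _ ?_
  split_ifs
  exacts [right_mem_ray _ _, right_mem_segment ℝ _ _]

lemma isPreconnected_edgeDrawn (a b : V) : IsPreconnected (edgeDrawn G Γ a b) := by
  refine IsPreconnected.union (Γ a) ?_ ?_ ?_ ?_ <;> split_ifs
  exacts [left_mem_ray _ _, left_mem_segment ℝ _ _, right_mem_ray _ _, left_mem_segment ℝ _ _,
    (convex_ray _ _).isPreconnected, (convex_segment _ _).isPreconnected,
    (convex_ray _ _).isPreconnected, (convex_segment _ _).isPreconnected]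

lemma edgeDrawn_of_deg_eq_one {x ℓ : V} (hℓ : deg G ℓ = 1) (hx : deg G x ≠ 1) :
    edgeDrawn G Γ x ℓ = ray (Γ x) (Γ ℓ) := by
  rw [edgeDrawn, if_pos hℓ, if_neg hx, union_eq_self_of_subset_right (segment_subset_ray _ _)]

namespace IsConvexRectDrawing

lemma disjoint_edgeDrawn (hΓ : IsConvexRectDrawing G Γ) {a b c d : V} (hab : G.Adj a b)
    (hcd : G.Adj c d) (hac : a ≠ c) (had : a ≠ d) (hbc : b ≠ c) (hbd : b ≠ d) :
    Disjoint (edgeDrawn G Γ a b) (edgeDrawn G Γ c d) := by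
  refine Set.disjoint_left.mpr fun p hp hp' => ?_
  have hne : s(a, b) ≠ s(c, d) := by simp [hac, had]
  obtain ⟨w, hw₁, hw₂, -⟩ := hΓ.2 a b c d hab hcd hne p ⟨hp, hp'⟩
  rcases hw₁ with rfl | rfl <;> rcases hw₂ with rfl | rfl <;> contradiction

lemma edgeDrawn_inter_subset (hΓ : IsConvexRectDrawing G Γ) {a b d : V} (hab : G.Adj a b)
    (had : G.Adj a d) (hbd : b ≠ d) : edgeDrawn G Γ a b ∩ edgeDrawn G Γ a d ⊆ {Γ a} := by
  intro p hp
  have hne : s(a, b) ≠ s(a, d) := by simp [hbd, hab.ne']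
  obtain ⟨w, hw₁, hw₂, rfl⟩ := hΓ.2 a b a d hab had hne p hp
  rcases hw₁ with rfl | rfl
  · rfl
  · rcases hw₂ with h | h
    exacts [absurd h hab.ne', absurd h hbd]

/-- The two leaf rays point in different directions, as they meet only in `Γ v`. -/
lemma exists_separates_leafEdges (hΓ : IsConvexRectDrawing G Γ) {v t ℓ₁ ℓ₂ : V}
    (hv : deg G v ≠ 1) (hvt : G.Adj v t) (hvℓ₁ : G.Adj v ℓ₁) (hvℓ₂ : G.Adj v ℓ₂)
    (hℓ₁ : deg G ℓ₁ = 1) (hℓ₂ : deg G ℓ₂ = 1) (hℓ : ℓ₁ ≠ ℓ₂) (htℓ₁ : t ≠ ℓ₁) (htℓ₂ : t ≠ ℓ₂) :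
    ∃ A B δ, Separates (edgeDrawn G Γ v ℓ₁ ∪ edgeDrawn G Γ v ℓ₂) A B ∧ Γ t ∈ A ∧
      quadrant δ (Γ v) ⊆ B := by
  obtain ⟨h₁, s₁, hray₁⟩ := ray_eq_halfLine (hΓ.1.1.ne hvℓ₁.ne) (hΓ.1.2.1 _ _ hvℓ₁)
  obtain ⟨h₂, s₂, hray₂⟩ := ray_eq_halfLine (hΓ.1.1.ne hvℓ₂.ne) (hΓ.1.2.1 _ _ hvℓ₂)
  rw [← edgeDrawn_of_deg_eq_one hℓ₁ hv] at hray₁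
  rw [← edgeDrawn_of_deg_eq_one hℓ₂ hv] at hray₂
  have hne : (h₁, s₁) ≠ (h₂, s₂) := by
    intro h
    obtain ⟨rfl, rfl⟩ := Prod.mk.inj h
    have hmem : Γ ℓ₂ ∈ edgeDrawn G Γ v ℓ₁ := by
      rw [hray₁, ← hray₂]
      exact right_mem_edgeDrawn _ _
    exact hvℓ₂.ne (hΓ.1.1 (hΓ.edgeDrawn_inter_subset hvℓ₁ hvℓ₂ hℓ
      ⟨hmem, right_mem_edgeDrawn _ _⟩)).symm
  have ht : Γ t ∉ edgeDrawn G Γ v ℓ₁ ∪ edgeDrawn G Γ v ℓ₂ := by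
    rintro (ht | ht)
    · exact hvt.ne (hΓ.1.1 (hΓ.edgeDrawn_inter_subset hvt hvℓ₁ htℓ₁
        ⟨right_mem_edgeDrawn _ _, ht⟩)).symm
    · exact hvt.ne (hΓ.1.1 (hΓ.edgeDrawn_inter_subset hvt hvℓ₂ htℓ₂
        ⟨right_mem_edgeDrawn _ _, ht⟩)).symm
  rw [hray₁, hray₂] at ht ⊢
  exact exists_separates_halfLine_union_of_notMem hne ht

end IsConvexRectDrawing

def leafStar (G : SimpleGraph V) (Γ : V → ℝ × ℝ) (v : V) : Set (ℝ × ℝ) :=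
  ⋃ (ℓ) (_ : G.Adj v ℓ ∧ deg G ℓ = 1), edgeDrawn G Γ v ℓ

lemma edgeDrawn_subset_leafStar {v ℓ : V} (hvℓ : G.Adj v ℓ) (hℓ : deg G ℓ = 1) :
    edgeDrawn G Γ v ℓ ⊆ leafStar G Γ v :=
  subset_iUnion₂ (s := fun ℓ (_ : G.Adj v ℓ ∧ deg G ℓ = 1) => edgeDrawn G Γ v ℓ) ℓ ⟨hvℓ, hℓ⟩

lemma IsConvexRectDrawing.disjoint_edgeDrawn_leafStar (hΓ : IsConvexRectDrawing G Γ)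
    {a b v : V} (hab : G.Adj a b) (ha : a ≠ v) (hb : b ≠ v)
    (ha' : ¬ (G.Adj v a ∧ deg G a = 1)) (hb' : ¬ (G.Adj v b ∧ deg G b = 1)) :
    Disjoint (edgeDrawn G Γ a b) (leafStar G Γ v) := by
  simp only [leafStar, disjoint_iUnion_right]
  rintro ℓ ⟨hvℓ, hℓ⟩
  exact hΓ.disjoint_edgeDrawn hab hvℓ ha (by rintro rfl; exact ha' ⟨hvℓ, hℓ⟩) hb
    (by rintro rfl; exact hb' ⟨hvℓ, hℓ⟩)

def walkDrawn (G : SimpleGraph V) (Γ : V → ℝ × ℝ) {a b : V} (p : G.Walk a b) : Set (ℝ × ℝ) :=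
  ⋃ d ∈ p.darts, edgeDrawn G Γ d.fst d.snd

lemma isPreconnected_walkDrawn_union {T : Set (ℝ × ℝ)} (hT : IsPreconnected T) {a b : V}
    (p : G.Walk a b) (hb : Γ b ∈ T) :
    IsPreconnected (walkDrawn G Γ p ∪ T) ∧ Γ a ∈ walkDrawn G Γ p ∪ T := by
  induction p with
  | nil => simpa [walkDrawn] using ⟨hT, hb⟩
  | @cons x y _ h q ih =>
    obtain ⟨hq, hq'⟩ := ih hb
    have hcons : walkDrawn G Γ (Walk.cons h q) ∪ T =
        edgeDrawn G Γ x y ∪ (walkDrawn G Γ q ∪ T) := by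
      simp [walkDrawn, union_assoc]
    rw [hcons]
    exact ⟨(isPreconnected_edgeDrawn _ _).union _ (right_mem_edgeDrawn _ _) hq' hq,
      mem_union_left _ (left_mem_edgeDrawn _ _)⟩

end Drawing
section CoreLeaf

open Set

variable {V : Type*} [Finite V] {G : SimpleGraph V} {Γ : V → ℝ × ℝ}

namespace IsConvexRectDrawing

/-- `S` is the drawing of the tree path from `t` to `w` followed by the edge `wℓ`. -/
lemma exists_isPreconnected_disjoint_leafStar (htree : G.IsTree)
    (hΓ : IsConvexRectDrawing G Γ) {v t w ℓ : V} (hv : IsCoreLeaf G v) (hvt : G.Adj v t)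
    (ht : 2 ≤ deg G t) (hw : 2 ≤ deg G w) (hwv : w ≠ v) (hwℓ : G.Adj w ℓ) (hℓ : deg G ℓ = 1) :
    ∃ S, IsPreconnected S ∧ Γ t ∈ S ∧ edgeDrawn G Γ w ℓ ⊆ S ∧
      Disjoint S (leafStar G Γ v) := by
  obtain ⟨p, hp⟩ := htree.connected.exists_isPath t w
  have hvp := notMem_support_of_isCoreLeaf hp ht hw hv hvt.ne hwv.symm
  obtain ⟨hS, htS⟩ := isPreconnected_walkDrawn_union (isPreconnected_edgeDrawn (Γ := Γ) w ℓ) p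
    (left_mem_edgeDrawn w ℓ)
  refine ⟨_, hS, htS, subset_union_right, disjoint_union_left.mpr ⟨?_, ?_⟩⟩
  · simp only [walkDrawn, disjoint_iUnion_left]
    intro d hd
    have h₁ := p.dart_fst_mem_support_of_mem_darts hd
    have h₂ := p.dart_snd_mem_support_of_mem_darts hd
    have := two_le_deg_of_mem_support hp ht hw h₁
    have := two_le_deg_of_mem_support hp ht hw h₂
    exact hΓ.disjoint_edgeDrawn_leafStar d.adj (ne_of_mem_of_not_mem h₁ hvp)
      (ne_of_mem_of_not_mem h₂ hvp) (fun h => by omega) (fun h => by omega)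
  · have := hv.1
    exact hΓ.disjoint_edgeDrawn_leafStar hwℓ hwv (by rintro rfl; omega) (fun h => by omega)
      (fun h => hwv (eq_of_adj_of_deg_eq_one hℓ hwℓ.symm h.1.symm))

theorem exists_separates_of_isCoreLeaf (htree : G.IsTree) (hno2 : ∀ v, deg G v ≠ 2)
    (hΓ : IsConvexRectDrawing G Γ) {v : V} (hv : IsCoreLeaf G v) :
    ∃ (K A B : Set (ℝ × ℝ)) (δ : Bool × Bool), Separates K A B ∧ Γ v ∈ K ∧
      K ⊆ leafStar G Γ v ∧ quadrant δ (Γ v) ⊆ B ∧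
      ∀ w, IsCoreLeaf G w → w ≠ v → leafStar G Γ w ⊆ A := by
  obtain ⟨t, ℓ₁, ℓ₂, hvt, ht, hℓ, hvℓ₁, hvℓ₂, hℓ₁, hℓ₂⟩ :=
    exists_adj_leaves_of_isCoreLeaf hno2 hv
  obtain ⟨A, B, δ, hsep, htA, hQ⟩ := hΓ.exists_separates_leafEdges (by have := hv.1; omega)
    hvt hvℓ₁ hvℓ₂ hℓ₁ hℓ₂ hℓ (by rintro rfl; omega) (by rintro rfl; omega)
  have hK := union_subset (edgeDrawn_subset_leafStar (Γ := Γ) hvℓ₁ hℓ₁)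
    (edgeDrawn_subset_leafStar hvℓ₂ hℓ₂)
  refine ⟨_, A, B, δ, hsep, mem_union_left _ (left_mem_edgeDrawn _ _), hK, hQ, ?_⟩
  intro w hw hwv z hz
  obtain ⟨ℓ, ⟨hwℓ, hℓ⟩, hz⟩ := mem_iUnion₂.mp hz
  obtain ⟨S, hS, htS, hzS, hSK⟩ :=
    hΓ.exists_isPreconnected_disjoint_leafStar htree hv hvt ht hw.1 hwv hwℓ hℓ
  exact hsep.subset_left_of_isPreconnected hS (hSK.mono_right hK) htS htA (hzS hz)

end IsConvexRectDrawing

end CoreLeaf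

theorem stmt7_general {V : Type*} [Fintype V] (G : SimpleGraph V)
    (htree : G.IsTree) (hno2 : ∀ v, deg G v ≠ 2)
    (hdraw : HasConvexDrawing G) :
    {v | IsSplitter G v}.ncard ≤ 2 := by
  obtain ⟨Γ, hΓ⟩ := hdraw
  by_contra! hS
  obtain ⟨s, hs⟩ := Set.nonempty_of_ncard_ne_zero (s := {v | IsSplitter G v}) (by omega)
  have hF : (Set.univ : Set (Bool × Bool)).ncard < {v | IsCoreLeaf G v}.ncard := by
    have := ncard_splitter_add_two_le htree hs
    rw [Set.ncard_univ, Nat.card_eq_fintype_card, Fintype.card_prod, Fintype.card_bool]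
    omega
  choose! K A B δ hsep hcorner hK hQ hside using
    fun v (hv : IsCoreLeaf G v) => hΓ.exists_separates_of_isCoreLeaf htree hno2 hv
  obtain ⟨v, hv, w, hw, hvw, hδ⟩ :=
    Set.exists_ne_map_eq_of_ncard_lt_of_maps_to hF (f := δ) fun _ _ => Set.mem_univ _
  refine (hsep v hv).not_quadrant_subset (hsep w hw) ?_ ?_ (hQ v hv) (hδ ▸ hQ w hw)
  · exact hside w hw v hv hvw (hK v hv (hcorner v hv))
  · exact (hK w hw).trans (hside v hv w hw hvw.symm)

/-- Let `T` be a tree with maximum degree at most 4 and no vertex of degree 2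
that admits a convex rectilinear planar drawing. Then `T` contains at most two
splitters. -/
theorem stmt7 {V : Type*} [Fintype V] (G : SimpleGraph V)
    (htree : G.IsTree) (hdeg : ∀ v, deg G v ≤ 4) (hno2 : ∀ v, deg G v ≠ 2)
    (hdraw : HasConvexDrawing G) :
    {v | IsSplitter G v}.ncard ≤ 2 :=
  stmt7_general G htree hno2 hdraw

end TurnRegular
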